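/- Let R be a supercommutative superring that is a superdomain and a unique factorization superring (UFSR). Then every normal irreducible element a of R is nilpotent: IsNilpotent a. (Theorem 3.3 ii of the paper.) -/

import Mathlib

/-! Basic notions for supercommutative superrings, following the paper
"A note on unique factorization in superrings". -/

section Defs

variable {R : Type*} [Ring R]

/-- `a` divides `b`: `b = c * a * d` for some `c, d`. -/
def SDvd (a b : R) : Prop := ∃ c d : R, b = c * a * d

/-- `a` is associated to `b`: `a = u * b * v` for units `u, v`. -/
def SAssociated (a b : R) : Prop := ∃ u v : Rˣ, a = (u : R) * b * (v : R)

/-- `a` is normal: `aR = Ra` as sets. -/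
def SNormal (a : R) : Prop :=
  {x : R | ∃ r : R, x = a * r} = {x : R | ∃ r : R, x = r * a}

/-- `a` is irreducible: a non-unit which is not a product of two non-units. -/
def SIrreducible (a : R) : Prop :=
  ¬ IsUnit a ∧ ∀ b c : R, a = b * c → IsUnit b ∨ IsUnit c

/-- `R` is a unique factorization superring: every nonzero non-unit admits a
factorization into normal irreducible elements, uniquely up to order and associates. -/
def IsUFSR (R : Type*) [Ring R] : Prop :=
  (∀ x : R, x ≠ 0 → ¬ IsUnit x →
      ∃ (d : ℕ) (f : Fin d → R),
        (∀ i, SNormal (f i) ∧ SIrreducible (f i)) ∧ x = (List.ofFn f).prod) ∧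
  (∀ x : R, x ≠ 0 → ¬ IsUnit x →
      ∀ (d n : ℕ) (f : Fin d → R) (g : Fin n → R),
        (∀ i, SNormal (f i) ∧ SIrreducible (f i)) →
        (∀ i, SNormal (g i) ∧ SIrreducible (g i)) →
        x = (List.ofFn f).prod → x = (List.ofFn g).prod →
        ∃ h : d = n, ∃ σ : Equiv.Perm (Fin n),
          ∀ i : Fin n, SAssociated (f (Fin.cast h.symm i)) (g (σ i)))

end Defs

/-- The supercommutativity condition for a `ℤ₂`-grading `𝒜` on `R`. -/
def SuperComm {R : Type*} [Ring R] (𝒜 : ZMod 2 → AddSubgroup R) : Prop :=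
  ∀ (i j : ZMod 2), ∀ x ∈ 𝒜 i, ∀ y ∈ 𝒜 j,
    x * y = ((-1 : ℤ) ^ (i.val * j.val)) • (y * x)

/-- `2` is a non-zerodivisor in `R`. -/
def TwoRegular (R : Type*) [Ring R] : Prop := ∀ x : R, 2 * x = 0 → x = 0

/-- The canonical superideal `𝒥 = R·R₁`, the (two-sided, by supercommutativity)
ideal generated by the odd part. -/
def canonicalSuperideal {R : Type*} [Ring R] (𝒜 : ZMod 2 → AddSubgroup R) : Ideal R :=
  Ideal.span (𝒜 1 : Set R)

/-- `R` is a superdomain: `𝒥` is a proper completely prime ideal. -/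
def IsSuperdomain {R : Type*} [Ring R] (𝒜 : ZMod 2 → AddSubgroup R) : Prop :=
  (1 : R) ∉ canonicalSuperideal 𝒜 ∧
    ∀ a b : R, a * b ∈ canonicalSuperideal 𝒜 →
      a ∈ canonicalSuperideal 𝒜 ∨ b ∈ canonicalSuperideal 𝒜

section UFSRAux

variable {R : Type*} [Ring R]

private lemma snormal_left {a : R} (h : SNormal a) (r : R) : ∃ s, a * r = s * a :=
  (Set.ext_iff.mp h (a * r)).mp ⟨r, rfl⟩

private lemma snormal_right {a : R} (h : SNormal a) (r : R) : ∃ s, r * a = a * s :=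
  (Set.ext_iff.mp h (r * a)).mpr ⟨r, rfl⟩

private lemma list_prod_right_mul {a : R} (ha : SNormal a) :
    ∀ L : List R, (∃ x ∈ L, ∃ r, x = r * a) → ∃ r, L.prod = r * a := by
  intro L
  induction L with
  | nil => rintro ⟨x, hx, -⟩; exact absurd hx List.not_mem_nil
  | cons b tl ih =>
    rintro ⟨x, hx, r, hxr⟩
    rcases List.mem_cons.mp hx with h1 | h1
    · obtain ⟨s, hs⟩ := snormal_left ha tl.prod
      subst h1
      exact ⟨r * s, by rw [List.prod_cons, hxr, mul_assoc, hs, ← mul_assoc]⟩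
    · obtain ⟨r', hr'⟩ := ih ⟨x, h1, r, hxr⟩
      exact ⟨b * r', by rw [List.prod_cons, hr', mul_assoc]⟩

private lemma odd_sq (𝒜 : ZMod 2 → AddSubgroup R) (hsc : SuperComm 𝒜) (h2 : TwoRegular R)
    {θ : R} (hθ : θ ∈ 𝒜 1) : θ * θ = 0 := by
  have h := hsc 1 1 θ hθ θ hθ
  rw [show (1 : ZMod 2).val * (1 : ZMod 2).val = 1 by decide, pow_one, neg_one_zsmul] at h
  refine h2 _ ?_
  rw [two_mul]
  nth_rewrite 1 [h]
  rw [neg_add_cancel]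

private lemma odd_conj (𝒜 : ZMod 2 → AddSubgroup R) [GradedRing 𝒜] (hsc : SuperComm 𝒜)
    (h2 : TwoRegular R) {θ : R} (hθ : θ ∈ 𝒜 1) (x : R) : θ * x * θ = 0 := by
  classical
  obtain ⟨x₀, hx₀, x₁, hx₁, hxx⟩ : ∃ x₀ ∈ 𝒜 0, ∃ x₁ ∈ 𝒜 1, x = x₀ + x₁ := by
    refine ⟨DirectSum.decompose 𝒜 x 0, SetLike.coe_mem _,
      DirectSum.decompose 𝒜 x 1, SetLike.coe_mem _, ?_⟩
    have h := DirectSum.sum_support_decompose 𝒜 x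
    have huniv : (∑ i : ZMod 2, (DirectSum.decompose 𝒜 x i : R)) = x := by
      refine Eq.trans ?_ h
      refine (Finset.sum_subset (Finset.subset_univ _) ?_).symm
      intro i _ hi
      rw [DFinsupp.notMem_support_iff.mp hi]
      rfl
    have hsplit : (∑ i : ZMod 2, (DirectSum.decompose 𝒜 x i : R)) =
        (DirectSum.decompose 𝒜 x 0 : R) + (DirectSum.decompose 𝒜 x 1 : R) := by
      rw [show (Finset.univ : Finset (ZMod 2)) = {0, 1} by decide,
        Finset.sum_insert (by decide), Finset.sum_singleton]
    exact huniv.symm.trans hsplit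
  subst hxx
  have e0 : θ * x₀ = x₀ * θ := by
    have h := hsc 1 0 θ hθ x₀ hx₀
    rw [show (1 : ZMod 2).val * (0 : ZMod 2).val = 0 by decide, pow_zero, one_zsmul] at h
    exact h
  have e1 : θ * x₁ = -(x₁ * θ) := by
    have h := hsc 1 1 θ hθ x₁ hx₁
    rw [show (1 : ZMod 2).val * (1 : ZMod 2).val = 1 by decide, pow_one, neg_one_zsmul] at h
    exact h
  have hθθ : θ * θ = 0 := odd_sq 𝒜 hsc h2 hθ
  have hsplit : θ * (x₀ + x₁) * θ = (θ * x₀) * θ + (θ * x₁) * θ := by noncomm_ring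
  rw [hsplit, e0, e1, mul_assoc, hθθ, mul_zero, neg_mul, mul_assoc, hθθ, mul_zero,
    neg_zero, add_zero]

private def UU (θ : R) : Submodule R R := Submodule.span R {y : R | ∃ d : R, y = θ * d}

private lemma UU_mul_right {θ x : R} (hx : x ∈ UU θ) (r : R) : x * r ∈ UU θ := by
  refine Submodule.span_induction (p := fun x _ => x * r ∈ UU θ) ?_ ?_ ?_ ?_ hx
  · rintro y ⟨d, rfl⟩
    exact Submodule.subset_span ⟨d * r, by rw [mul_assoc]⟩
  · show (0 : R) * r ∈ UU θ
    rw [zero_mul]; exact zero_mem _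
  · intro x y _ _ h1 h2
    show (x + y) * r ∈ UU θ
    rw [add_mul]; exact add_mem h1 h2
  · intro c x _ h1
    rw [smul_eq_mul, mul_assoc, ← smul_eq_mul]
    exact Submodule.smul_mem _ c h1

private lemma UU_conj {θ : R} (hconj : ∀ x : R, θ * x * θ = 0) {x : R} (hx : x ∈ UU θ) :
    ∀ c : R, θ * (c * x) = 0 := by
  refine Submodule.span_induction (p := fun x _ => ∀ c, θ * (c * x) = 0) ?_ ?_ ?_ ?_ hx
  · rintro y ⟨d, rfl⟩ c
    have h : θ * (c * (θ * d)) = (θ * c * θ) * d := by noncomm_ring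
    rw [h, hconj, zero_mul]
  · intro c; rw [mul_zero, mul_zero]
  · intro x y _ _ h1 h2 c
    rw [mul_add, mul_add, h1, h2, add_zero]
  · intro r x _ h1 c
    rw [smul_eq_mul, show c * (r * x) = (c * r) * x from (mul_assoc _ _ _).symm, h1]

private lemma UU_mul_zero {θ : R} (hconj : ∀ x : R, θ * x * θ = 0) {x y : R}
    (hx : x ∈ UU θ) (hy : y ∈ UU θ) : x * y = 0 := by
  refine Submodule.span_induction (p := fun x _ => x * y = 0) ?_ ?_ ?_ ?_ hx
  · rintro z ⟨d, rfl⟩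
    rw [mul_assoc]
    exact UU_conj hconj hy d
  · show (0 : R) * y = 0
    rw [zero_mul]
  · intro x1 x2 _ _ h1 h2
    rw [add_mul, h1, h2, add_zero]
  · intro r x1 _ h1
    rw [smul_eq_mul, mul_assoc, h1, mul_zero]

private lemma ufsr_isNilpotent_sum [Nontrivial R] :
    ∀ s : Finset R, (∀ θ ∈ s, ∀ x : R, θ * x * θ = 0) → ∀ F : R → R,
      IsNilpotent (∑ θ ∈ s, F θ * θ) := by
  classical
  intro s
  induction s using Finset.induction_on with
  | empty => intro _ F; rw [Finset.sum_empty]; exact ⟨1, by rw [pow_one]⟩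
  | @insert b t hb ih =>
    intro hconj F
    rw [Finset.sum_insert hb]
    have hu : F b * b ∈ UU b := by
      have := Submodule.smul_mem (UU b) (F b) (Submodule.subset_span ⟨1, (mul_one b).symm⟩)
      simpa [smul_eq_mul] using this
    obtain ⟨M, hM⟩ := ih (fun θ hθ => hconj θ (Finset.mem_insert_of_mem hθ)) F
    have hbconj := hconj b (Finset.mem_insert_self b t)
    set u := F b * b with hudef
    set w := ∑ θ ∈ t, F θ * θ with hwdef
    have key : ∀ m : ℕ, ∃ v ∈ UU b, (u + w) ^ m = w ^ m + v := by
      intro m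
      induction m with
      | zero => exact ⟨0, zero_mem _, by simp⟩
      | succ m ihm =>
        obtain ⟨v, hv, hvm⟩ := ihm
        refine ⟨w ^ m * u + (v * u + v * w), ?_, ?_⟩
        · refine add_mem ?_ (add_mem (UU_mul_right hv u) (UU_mul_right hv w))
          have := Submodule.smul_mem (UU b) (w ^ m) hu
          simpa [smul_eq_mul] using this
        · rw [pow_succ, pow_succ, hvm]; noncomm_ring
    obtain ⟨v, hv, hvm⟩ := key M
    refine ⟨M + M, ?_⟩
    rw [pow_add, hvm, hM, zero_add]
    exact UU_mul_zero hbconj hv hv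

private lemma mem_J_nilpotent [Nontrivial R] (𝒜 : ZMod 2 → AddSubgroup R) [GradedRing 𝒜]
    (hsc : SuperComm 𝒜) (h2 : TwoRegular R) {z : R}
    (hz : z ∈ canonicalSuperideal 𝒜) : IsNilpotent z := by
  have hz' : z ∈ Submodule.span R ((𝒜 1 : Set R)) := hz
  obtain ⟨c, hsupp, hsum⟩ := Submodule.mem_span_set.mp hz'
  have hzz : z = ∑ θ ∈ c.support, c θ * θ := by
    rw [← hsum, Finsupp.sum]
    rfl
  rw [hzz]
  exact ufsr_isNilpotent_sum c.support (fun θ hθ => odd_conj 𝒜 hsc h2 (hsupp hθ)) c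

end UFSRAux

/-- **Theorem 3.3 ii)**: in a unique factorization superdomain every normal
irreducible element is nilpotent. -/
theorem ufsr_superdomain_normal_irreducible_isNilpotent
    {R : Type*} [Ring R] [Nontrivial R]
    (𝒜 : ZMod 2 → AddSubgroup R) [GradedRing 𝒜]
    (hsc : SuperComm 𝒜) (h2 : TwoRegular R) (hodd : 𝒜 1 ≠ ⊥)
    (hdom : IsSuperdomain 𝒜) (hufsr : IsUFSR R) :
    ∀ a : R, SNormal a → SIrreducible a → IsNilpotent a := by
  intro a hna hia
  by_cases haJ : a ∈ canonicalSuperideal 𝒜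
  · exact mem_J_nilpotent 𝒜 hsc h2 haJ
  exfalso
  obtain ⟨θ, hθ1, hθ0⟩ : ∃ θ ∈ 𝒜 1, θ ≠ 0 := by
    by_contra hcon
    push_neg at hcon
    exact hodd ((AddSubgroup.eq_bot_iff_forall _).mpr hcon)
  have hanu : ¬ IsUnit a := hia.1
  have hmemJ : ∀ ψ ∈ 𝒜 1, ψ ∈ canonicalSuperideal 𝒜 := fun ψ h => Ideal.subset_span h
  -- Key step: every odd element is a right multiple of `a`.
  have key : ∀ ψ ∈ 𝒜 1, ∃ r, ψ = r * a := by
    intro ψ hψ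
    set y := a + ψ with hy
    have hynu : ¬ IsUnit y := by
      rintro ⟨yu, hyu⟩
      have hnn2 : ((↑yu⁻¹ : R) * ψ) * ((↑yu⁻¹ : R) * ψ) = 0 := by
        have h1 : ((↑yu⁻¹ : R) * ψ) * ((↑yu⁻¹ : R) * ψ)
            = (↑yu⁻¹ : R) * (ψ * (↑yu⁻¹ : R) * ψ) := by noncomm_ring
        rw [h1, odd_conj 𝒜 hsc h2 hψ, mul_zero]
      have hu1 : IsUnit (1 - (↑yu⁻¹ : R) * ψ) := by
        refine ⟨⟨1 - (↑yu⁻¹ : R) * ψ, 1 + (↑yu⁻¹ : R) * ψ, ?_, ?_⟩, rfl⟩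
        · have h1 : (1 - (↑yu⁻¹ : R) * ψ) * (1 + (↑yu⁻¹ : R) * ψ)
              = 1 - ((↑yu⁻¹ : R) * ψ) * ((↑yu⁻¹ : R) * ψ) := by noncomm_ring
          rw [h1, hnn2, sub_zero]
        · have h1 : (1 + (↑yu⁻¹ : R) * ψ) * (1 - (↑yu⁻¹ : R) * ψ)
              = 1 - ((↑yu⁻¹ : R) * ψ) * ((↑yu⁻¹ : R) * ψ) := by noncomm_ring
          rw [h1, hnn2, sub_zero]
      have ha' : a = y * (1 - (↑yu⁻¹ : R) * ψ) := by
        have h1 : y * (1 - (↑yu⁻¹ : R) * ψ) = y - (y * (↑yu⁻¹ : R)) * ψ := by noncomm_ring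
        rw [h1, ← hyu, Units.mul_inv, one_mul, hyu, hy, add_sub_cancel_right]
      exact hanu (by rw [ha']; exact IsUnit.mul ⟨yu, hyu⟩ hu1)
    have hyJ : y ∉ canonicalSuperideal 𝒜 := by
      intro h
      have hsub := Ideal.sub_mem _ h (hmemJ ψ hψ)
      have : y - ψ = a := by rw [hy, add_sub_cancel_right]
      exact haJ (this ▸ hsub)
    have hy0 : y ≠ 0 := fun h => hyJ (h ▸ zero_mem _)
    obtain ⟨t, ht⟩ := snormal_right hna ψ
    set w := a + ψ + t with hw
    have hz : y * y = a * w := by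
      have h1 : y * y = a * a + a * ψ + ψ * a + ψ * ψ := by rw [hy]; noncomm_ring
      rw [h1, ht, odd_sq 𝒜 hsc h2 hψ, add_zero, hw]
      noncomm_ring
    have hzJ : y * y ∉ canonicalSuperideal 𝒜 := fun h => (hdom.2 y y h).elim hyJ hyJ
    have hz0 : y * y ≠ 0 := fun h => hzJ (h ▸ zero_mem _)
    have hznu : ¬ IsUnit (y * y) := by
      rintro ⟨zu, hzu⟩
      have hc : a * (w * (↑zu⁻¹ : R)) = 1 := by
        rw [← mul_assoc, ← hz, ← hzu, Units.mul_inv]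
      obtain ⟨s, hs⟩ := (Set.ext_iff.mp hna 1).mp ⟨_, hc.symm⟩
      have hseq : s = w * (↑zu⁻¹ : R) := by
        calc s = s * (a * (w * (↑zu⁻¹ : R))) := by rw [hc, mul_one]
        _ = (s * a) * (w * (↑zu⁻¹ : R)) := by rw [mul_assoc]
        _ = w * (↑zu⁻¹ : R) := by rw [← hs, one_mul]
      refine hanu ⟨⟨a, w * (↑zu⁻¹ : R), hc, ?_⟩, rfl⟩
      rw [← hseq, ← hs]
    have hw0 : w ≠ 0 := fun h => hz0 (by rw [hz, h, mul_zero])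
    have hwnu : ¬ IsUnit w := by
      rintro ⟨wu, hwu⟩
      have hww : (y * y) * (↑wu⁻¹ : R) = a := by
        rw [hz, mul_assoc, ← hwu, Units.mul_inv, mul_one]
      have ha' : a = y * (y * (↑wu⁻¹ : R)) := by rw [← mul_assoc, hww]
      rcases hia.2 y (y * (↑wu⁻¹ : R)) ha' with h | h
      · exact hynu h
      · refine hynu ?_
        have hyy : y = (y * (↑wu⁻¹ : R)) * (↑wu : R) := by
          rw [mul_assoc, Units.inv_mul, mul_one]
        rw [hyy]
        exact h.mul wu.isUnit
    obtain ⟨n, g, hg, hgprod⟩ := hufsr.1 y hy0 hynu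
    obtain ⟨p, k, hk, hkprod⟩ := hufsr.1 w hw0 hwnu
    have hFprop : ∀ i, SNormal (Fin.append g g i) ∧ SIrreducible (Fin.append g g i) := by
      intro i
      refine Fin.addCases (motive := fun i => SNormal (Fin.append g g i) ∧
        SIrreducible (Fin.append g g i)) ?_ ?_ i
      · intro i; rw [Fin.append_left]; exact hg i
      · intro i; rw [Fin.append_right]; exact hg i
    have hGprop : ∀ i, SNormal (Fin.append (fun _ : Fin 1 => a) k i) ∧
        SIrreducible (Fin.append (fun _ : Fin 1 => a) k i) := by
      intro i
      refine Fin.addCases (motive := fun i => SNormal (Fin.append (fun _ : Fin 1 => a) k i) ∧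
        SIrreducible (Fin.append (fun _ : Fin 1 => a) k i)) ?_ ?_ i
      · intro i; rw [Fin.append_left]; exact ⟨hna, hia⟩
      · intro i; rw [Fin.append_right]; exact hk i
    have hzF : y * y = (List.ofFn (Fin.append g g)).prod := by
      rw [List.ofFn_fin_append, List.prod_append, ← hgprod]
    have hzG : y * y = (List.ofFn (Fin.append (fun _ : Fin 1 => a) k)).prod := by
      rw [List.ofFn_fin_append, List.prod_append, List.ofFn_const, List.prod_replicate,
        pow_one, hz, hkprod]
    obtain ⟨hlen, σ, hσ⟩ := hufsr.2 (y * y) hz0 hznu (n + n) (1 + p)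
      (Fin.append g g) (Fin.append (fun _ : Fin 1 => a) k) hFprop hGprop hzF hzG
    set i0 : Fin (1 + p) := ⟨0, by omega⟩ with hi0
    obtain ⟨u, v, huv⟩ := hσ (σ⁻¹ i0)
    have h00 : Fin.append (fun _ : Fin 1 => a) k (σ (σ⁻¹ i0)) = a := by
      rw [show σ (σ⁻¹ i0) = i0 from σ.apply_symm_apply i0]
      have h01 : i0 = Fin.castAdd p (0 : Fin 1) := by apply Fin.ext; simp [hi0, Fin.coe_castAdd]
      rw [h01, Fin.append_left]
    rw [h00] at huv
    obtain ⟨j', hj'⟩ : ∃ j' : Fin n,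
        Fin.append g g (Fin.cast hlen.symm (σ⁻¹ i0)) = g j' := by
      refine Fin.addCases (motive := fun j => ∃ j' : Fin n, Fin.append g g j = g j')
        (fun i => ⟨i, Fin.append_left g g i⟩) (fun i => ⟨i, Fin.append_right g g i⟩) _
    rw [hj'] at huv
    have hgj : ∃ r, g j' = r * a := by
      obtain ⟨s, hsav⟩ := snormal_left hna (↑v : R)
      exact ⟨↑u * s, by rw [huv, mul_assoc, hsav, ← mul_assoc]⟩
    obtain ⟨r, hrprod⟩ := list_prod_right_mul hna (List.ofFn g)
      ⟨g j', List.mem_ofFn.mpr ⟨j', rfl⟩, hgj⟩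
    refine ⟨r - 1, ?_⟩
    rw [sub_mul, one_mul, ← hrprod, ← hgprod, hy, add_sub_cancel_left]
  -- Every element of the canonical superideal is a right multiple of `a`.
  have hJRa : ∀ x ∈ canonicalSuperideal 𝒜, ∃ r, x = r * a := by
    intro x hx
    have hx' : x ∈ Submodule.span R ((𝒜 1 : Set R)) := hx
    refine Submodule.span_induction (p := fun x _ => ∃ r, x = r * a) ?_ ?_ ?_ ?_ hx'
    · intro ψ hψ; exact key ψ hψ
    · exact ⟨0, by rw [zero_mul]⟩
    · rintro x y _ _ ⟨r, rfl⟩ ⟨r', rfl⟩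
      exact ⟨r + r', by rw [add_mul]⟩
    · rintro c x _ ⟨r, rfl⟩
      exact ⟨c * r, by rw [smul_eq_mul, mul_assoc]⟩
  -- Iterate: θ = a ^ m * e with e in the superideal.
  have hiter : ∀ m : ℕ, ∃ e, e ∈ canonicalSuperideal 𝒜 ∧ θ = a ^ m * e := by
    intro m
    induction m with
    | zero => exact ⟨θ, hmemJ θ hθ1, by rw [pow_zero, one_mul]⟩
    | succ m ih =>
      obtain ⟨e, heJ, hee⟩ := ih
      obtain ⟨r, hre⟩ := hJRa e heJ
      obtain ⟨s, hsr⟩ := snormal_right hna r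
      have hes : e = a * s := by rw [hre, hsr]
      have hsJ : s ∈ canonicalSuperideal 𝒜 := (hdom.2 a s (hes ▸ heJ)).resolve_left haJ
      exact ⟨s, hsJ, by rw [pow_succ, mul_assoc, ← hes, hee]⟩
  have hθnu : ¬ IsUnit θ := by
    rintro ⟨un, hun⟩
    refine hdom.1 ?_
    have h1 : (1 : R) = (↑un⁻¹ : R) * θ := by rw [← hun, Units.inv_mul]
    rw [h1]
    exact Ideal.mul_mem_left _ _ (hmemJ θ hθ1)
  obtain ⟨m, hfun, hhprop, hhprod⟩ := hufsr.1 θ hθ0 hθnu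
  obtain ⟨e, heJ, hee⟩ := hiter m
  have he0 : e ≠ 0 := fun h => hθ0 (by rw [hee, h, mul_zero])
  have henu : ¬ IsUnit e := by
    rintro ⟨un, hun⟩
    refine hdom.1 ?_
    have h1 : (1 : R) = (↑un⁻¹ : R) * e := by rw [← hun, Units.inv_mul]
    rw [h1]
    exact Ideal.mul_mem_left _ _ heJ
  obtain ⟨ℓ, q, hq, hqprod⟩ := hufsr.1 e he0 henu
  have hF2prop : ∀ i, SNormal (Fin.append (fun _ : Fin m => a) q i) ∧
      SIrreducible (Fin.append (fun _ : Fin m => a) q i) := by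
    intro i
    refine Fin.addCases (motive := fun i => SNormal (Fin.append (fun _ : Fin m => a) q i) ∧
      SIrreducible (Fin.append (fun _ : Fin m => a) q i)) ?_ ?_ i
    · intro i; rw [Fin.append_left]; exact ⟨hna, hia⟩
    · intro i; rw [Fin.append_right]; exact hq i
  have hθF2 : θ = (List.ofFn (Fin.append (fun _ : Fin m => a) q)).prod := by
    rw [List.ofFn_fin_append, List.prod_append, List.ofFn_const, List.prod_replicate,
      ← hqprod]
    exact hee
  obtain ⟨hmeq, -⟩ := hufsr.2 θ hθ0 hθnu m (m + ℓ) hfun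
    (Fin.append (fun _ : Fin m => a) q) hhprop hF2prop hhprod hθF2
  have hℓ0 : ℓ = 0 := by omega
  subst hℓ0
  have he1 : e = 1 := by rw [hqprod]; simp
  exact henu (by rw [he1]; exact isUnit_one)
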